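/- In the nested multivariate normal model, the discrimination parameter of the full panel dominates that of any sub-panel: if μ_f ∈ ℝ^{d}, Σ_f is positive definite, and (μ_r, Σ_r) is the restriction to a subset of coordinates, then μ_f'Σ_f^{-1}μ_f ≥ μ_r'Σ_r^{-1}μ_r; hence ROC_f(t) ≥ ROC_r(t) for all t ∈ (0,1) where ROC(t) = Φ(√(μ'Σ^{-1}μ) + Φ^{-1}(t)). -/

import Mathlib

open ProbabilityTheory Matrix

/-- The standard normal cumulative distribution function. -/
noncomputable def Phi : ℝ → ℝ := fun x => cdf (gaussianReal 0 1) x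

lemma dot_extend {d m : ℕ} {e : Fin m → Fin d} (he : Function.Injective e)
    (y : Fin m → ℝ) (g : Fin d → ℝ) :
    ∑ i, Function.extend e y 0 i * g i = ∑ j, y j * g (e j) := by
  classical
  have h1 : ∑ j, y j * g (e j)
      = ∑ i ∈ Finset.univ.image e, Function.extend e y 0 i * g i := by
    rw [Finset.sum_image (fun a _ b _ h => he h)]
    simp [he.extend_apply]
  rw [h1]
  refine (Finset.sum_subset (Finset.subset_univ _) ?_).symm
  intro i _ hi
  have hne : ¬ ∃ a, e a = i := by
    intro ⟨a, ha⟩; exact hi (Finset.mem_image.mpr ⟨a, Finset.mem_univ a, ha⟩)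
  rw [Function.extend_apply' _ _ _ hne]
  simp

lemma sym_dot {d : ℕ} {S : Matrix (Fin d) (Fin d) ℝ} (hS : S.IsHermitian)
    (u v : Fin d → ℝ) : u ⬝ᵥ S.mulVec v = v ⬝ᵥ S.mulVec u := by
  have hT : Sᵀ = S := by
    ext i j
    have := congrFun (congrFun hS.eq i) j
    simpa [Matrix.conjTranspose_apply] using this
  rw [Matrix.dotProduct_mulVec]
  nth_rewrite 1 [← hT]
  rw [Matrix.vecMul_transpose, dotProduct_comm]

lemma quad_lower {d : ℕ} {S : Matrix (Fin d) (Fin d) ℝ} (hS : S.PosDef)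
    (μ x : Fin d → ℝ) :
    2 * (x ⬝ᵥ μ) - x ⬝ᵥ S.mulVec x ≤ μ ⬝ᵥ S⁻¹.mulVec μ := by
  set a := S⁻¹.mulVec μ with ha
  have hdet : IsUnit S.det := isUnit_iff_ne_zero.mpr (ne_of_gt hS.det_pos)
  have hSa : S.mulVec a = μ := by
    rw [ha, Matrix.mulVec_mulVec, Matrix.mul_nonsing_inv _ hdet, Matrix.one_mulVec]
  have h0 : 0 ≤ (x - a) ⬝ᵥ S.mulVec (x - a) := by
    have := hS.posSemidef.dotProduct_mulVec_nonneg (x - a)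
    simpa using this
  have h1 : a ⬝ᵥ S.mulVec x = x ⬝ᵥ μ := by
    rw [sym_dot hS.isHermitian, hSa]
  have h2 : x ⬝ᵥ S.mulVec a = x ⬝ᵥ μ := by rw [hSa]
  have h3 : a ⬝ᵥ S.mulVec a = μ ⬝ᵥ a := by rw [hSa, dotProduct_comm]
  have hexp : (x - a) ⬝ᵥ S.mulVec (x - a)
      = x ⬝ᵥ S.mulVec x - 2 * (x ⬝ᵥ μ) + μ ⬝ᵥ a := by
    rw [Matrix.mulVec_sub, dotProduct_sub, sub_dotProduct,
      sub_dotProduct, h1, h2, h3]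
    ring
  linarith [hexp ▸ h0]

/-- In the nested multivariate normal model, the discrimination parameter of
the full panel dominates that of any sub-panel: if `μ_f ∈ ℝ^d`, `Σ_f` is positive definite,
and `(μ_r, Σ_r)` is the restriction to a subset of coordinates (given by an injection
`e : Fin m → Fin d`), then `μ_f'Σ_f⁻¹μ_f ≥ μ_r'Σ_r⁻¹μ_r`; hence `ROC_f(t) ≥ ROC_r(t)` for
all `t ∈ (0,1)`, where `ROC(t) = Φ(√(μ'Σ⁻¹μ) + Φ⁻¹(t))`. -/
theorem nested_mahalanobis_dominance
    {d m : ℕ} (Sf : Matrix (Fin d) (Fin d) ℝ) (hSf : Sf.PosDef) (μf : Fin d → ℝ)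
    (e : Fin m → Fin d) (he : Function.Injective e)
    (μr : Fin m → ℝ) (hμr : μr = μf ∘ e)
    (Sr : Matrix (Fin m) (Fin m) ℝ) (hSr : Sr = Sf.submatrix e e)
    (Phiinv : ℝ → ℝ) (hPhiinv : ∀ t ∈ Set.Ioo (0 : ℝ) 1, Phi (Phiinv t) = t) :
    μf ⬝ᵥ Sf⁻¹.mulVec μf ≥ μr ⬝ᵥ Sr⁻¹.mulVec μr ∧
    ∀ t ∈ Set.Ioo (0 : ℝ) 1,
      Phi (Real.sqrt (μf ⬝ᵥ Sf⁻¹.mulVec μf) + Phiinv t) ≥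
        Phi (Real.sqrt (μr ⬝ᵥ Sr⁻¹.mulVec μr) + Phiinv t) := by
  classical
  subst hμr hSr
  set Sr := Sf.submatrix e e with hSrdef
  set μr := μf ∘ e with hμrdef
  -- Sr is positive definite
  have hquad : ∀ y : Fin m → ℝ,
      (Function.extend e y 0) ⬝ᵥ Sf.mulVec (Function.extend e y 0)
      = y ⬝ᵥ Sr.mulVec y := by
    intro y
    set x := Function.extend e y 0 with hx
    have h1 : x ⬝ᵥ Sf.mulVec x = ∑ j, y j * (Sf.mulVec x) (e j) :=
      dot_extend he y (Sf.mulVec x)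
    rw [h1]
    apply Finset.sum_congr rfl
    intro j _
    congr 1
    show ∑ k, Sf (e j) k * x k = (Sr.mulVec y) j
    have : ∑ k, x k * Sf (e j) k = ∑ l, y l * Sf (e j) (e l) :=
      dot_extend he y (fun k => Sf (e j) k)
    calc ∑ k, Sf (e j) k * x k = ∑ k, x k * Sf (e j) k := by
          simp [mul_comm]
      _ = ∑ l, y l * Sf (e j) (e l) := this
      _ = (Sr.mulVec y) j := by
          simp [Matrix.mulVec, dotProduct, hSrdef, mul_comm]
  have hSrPD : Sr.PosDef := by
    refine Matrix.PosDef.of_dotProduct_mulVec_pos ?_ ?_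
    · have := hSf.isHermitian
      ext i j
      have := congrFun (congrFun this.eq (e j)) (e i)
      simpa [Matrix.conjTranspose, hSrdef] using
        (congrFun (congrFun hSf.isHermitian.eq (e j)) (e i)).symm
    · intro y hy
      have hxne : Function.extend e y 0 ≠ 0 := by
        intro h
        apply hy
        funext j
        have := congrFun h (e j)
        simpa [he.extend_apply] using this
      have := hSf.dotProduct_mulVec_pos (x := Function.extend e y 0) hxne
      simp only [star_trivial] at this ⊢
      rw [← hquad y]
      simpa using this
  -- main inequality
  have hdetr : IsUnit Sr.det := isUnit_iff_ne_zero.mpr (ne_of_gt hSrPD.det_pos)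
  set y := Sr⁻¹.mulVec μr with hy
  have hSry : Sr.mulVec y = μr := by
    rw [hy, Matrix.mulVec_mulVec, Matrix.mul_nonsing_inv _ hdetr, Matrix.one_mulVec]
  set x := Function.extend e y 0 with hx
  have hdotμ : x ⬝ᵥ μf = y ⬝ᵥ μr := by
    have := dot_extend he y μf
    simpa [dotProduct, hμrdef] using this
  have hmain : μr ⬝ᵥ Sr⁻¹.mulVec μr ≤ μf ⬝ᵥ Sf⁻¹.mulVec μf := by
    have hql := quad_lower hSf μf x
    have h2 : x ⬝ᵥ Sf.mulVec x = y ⬝ᵥ Sr.mulVec y := hquad y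
    have h3 : y ⬝ᵥ Sr.mulVec y = y ⬝ᵥ μr := by rw [hSry]
    have h4 : μr ⬝ᵥ Sr⁻¹.mulVec μr = y ⬝ᵥ μr := by
      rw [← hy, dotProduct_comm]
    linarith [hql, h2.symm ▸ h3]
  refine ⟨hmain, fun t ht => ?_⟩
  have hmono : Monotone Phi := fun a b h => monotone_cdf _ h
  apply hmono
  have : Real.sqrt (μr ⬝ᵥ Sr⁻¹.mulVec μr) ≤ Real.sqrt (μf ⬝ᵥ Sf⁻¹.mulVec μf) :=
    Real.sqrt_le_sqrt hmain
  linarith
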